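/- arXiv:1312.3848 — 6 statements merged into one kernel-verified Lean document; each statement's English description precedes it below -/
import Mathlib

section
/- For every integer n ≥ 1, the multiplicity of 0 as a root of the Möbius polynomial M_n (as an element of ℤ[X]) equals n/rad(n), where rad(n) is the product of the distinct primes dividing n. -/
open ArithmeticFunction Polynomial
open scoped ArithmeticFunction.Moebius

lemma squarefree_prod_primeFactors_aux (n : ℕ) (hn : n ≠ 0) :
    Squarefree (∏ p ∈ n.primeFactors, p) := by
  have hprime : ∀ p ∈ n.primeFactors, p.Prime := fun p hp => Nat.prime_of_mem_primeFactors hp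
  have hne : (∏ p ∈ n.primeFactors, p) ≠ 0 :=
    Finset.prod_ne_zero_iff.mpr fun p hp => (hprime p hp).ne_zero
  apply Nat.squarefree_of_factorization_le_one hne
  intro q
  rw [Nat.factorization_prod fun p hp => (hprime p hp).ne_zero]
  rw [Finset.sum_apply']
  have : ∀ p ∈ n.primeFactors, (Nat.factorization p) q = if p = q then 1 else 0 := by
    intro p hp
    rw [Nat.Prime.factorization (hprime p hp)]
    simp [Finsupp.single_apply]
  rw [Finset.sum_congr rfl this, Finset.sum_ite_eq' n.primeFactors q (fun _ => 1)]
  split <;> simp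

/-- For `n ≥ 1`, the multiplicity of `0` as a root of the Möbius polynomial
`M_n = Σ_{d ∣ n} μ(n/d)·X^d ∈ ℤ[X]` equals `n / rad(n)`, where `rad(n)` is the product of the
distinct primes dividing `n`. -/
theorem mobiusPolynomial_rootMultiplicity_zero (n : ℕ) (hn : 1 ≤ n) :
    (∑ d ∈ n.divisors, Polynomial.C (μ (n / d)) * Polynomial.X ^ d).rootMultiplicity 0 =
      n / ∏ p ∈ n.primeFactors, p := by
  have hn0 : n ≠ 0 := by omega
  set R := ∏ p ∈ n.primeFactors, p with hR
  set p : Polynomial ℤ := ∑ d ∈ n.divisors, Polynomial.C (μ (n / d)) * Polynomial.X ^ d with hp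
  have hRdvd : R ∣ n := Nat.prod_primeFactors_dvd n
  have hRpos : 0 < R := Nat.pos_of_dvd_of_pos hRdvd (Nat.pos_of_ne_zero hn0)
  have hRsq : Squarefree R := squarefree_prod_primeFactors_aux n hn0
  have hcoeff : ∀ k, p.coeff k = if k ∈ n.divisors then (μ (n / k) : ℤ) else 0 := by
    intro k
    rw [hp, Polynomial.finset_sum_coeff]
    simp only [Polynomial.coeff_C_mul, Polynomial.coeff_X_pow, mul_ite, mul_one, mul_zero]
    exact Finset.sum_ite_eq n.divisors k (fun d => (μ (n / d) : ℤ))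
  have hm0 : p.coeff (n / R) ≠ 0 := by
    have h1 : n / R ∈ n.divisors := Nat.mem_divisors.mpr ⟨Nat.div_dvd_of_dvd hRdvd, hn0⟩
    rw [hcoeff, if_pos h1, Nat.div_div_self hRdvd hn0]
    exact moebius_ne_zero_iff_squarefree.mpr hRsq
  have hp0 : p ≠ 0 := fun h => hm0 (by simp [h])
  rw [Polynomial.rootMultiplicity_eq_natTrailingDegree']
  apply le_antisymm
  · exact Polynomial.natTrailingDegree_le_of_ne_zero hm0
  · apply Polynomial.le_natTrailingDegree hp0
    intro m hm
    rw [hcoeff]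
    split_ifs with h
    · by_contra hne
      obtain ⟨hmd, -⟩ := Nat.mem_divisors.mp h
      have hm0' : m ≠ 0 := by
        rintro rfl
        exact hn0 (Nat.zero_dvd.mp hmd)
      have hsq : Squarefree (n / m) := moebius_ne_zero_iff_squarefree.mp hne
      have hdvd : n / m ∣ R := by
        have hsub : (n / m).primeFactors ⊆ n.primeFactors :=
          Nat.primeFactors_mono (Nat.div_dvd_of_dvd hmd) hn0
        calc n / m = ∏ q ∈ (n / m).primeFactors, q :=
              (Nat.prod_primeFactors_of_squarefree hsq).symm
          _ ∣ R := Finset.prod_dvd_prod_of_subset _ _ _ hsub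
      have hle : n / m ≤ R := Nat.le_of_dvd hRpos hdvd
      have hpos : 0 < n / m :=
        Nat.div_pos (Nat.le_of_dvd (Nat.pos_of_ne_zero hn0) hmd) (Nat.pos_of_ne_zero hm0')
      have : n / R ≤ n / (n / m) := Nat.div_le_div_left hle hpos
      rw [Nat.div_div_self hmd hn0] at this
      omega
    · rfl
end

section
/- For all integers n ≥ 1 and x ≥ 0, the number of aperiodic words of length n over an alphabet of x letters equals M_n(x). Here a word w : ZMod n → Fin x is aperiodic if the only rotation fixing it is the trivial one, i.e., if whenever d ∈ ZMod n satisfies w(i + d) = w(i) for all i ∈ ZMod n, then d = 0. -/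
open ArithmeticFunction
open scoped ArithmeticFunction.Moebius

namespace AperiodicCount

variable {x n : ℕ}

/-- `k : ℕ` is a period of the word `w`. -/
def IsPer (w : ZMod n → Fin x) (k : ℕ) : Prop := ∀ i, w (i + (k : ZMod n)) = w i

lemma isPer_n (w : ZMod n → Fin x) : IsPer w n := by
  intro i; simp [ZMod.natCast_self]

lemma isPer_mul {w : ZMod n → Fin x} {a : ℕ} (ha : IsPer w a) (c : ℕ) : IsPer w (c * a) := by
  induction c with
  | zero => intro i; simp
  | succ k ih =>
    intro i
    have h1 := ha i
    have h2 := ih (i + (a : ZMod n))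
    push_cast at h2 ⊢
    calc w (i + ((k : ZMod n) + 1) * (a : ZMod n))
        = w (i + (a : ZMod n) + (k : ZMod n) * (a : ZMod n)) := by ring_nf
      _ = w (i + (a : ZMod n)) := h2
      _ = w i := h1

variable [NeZero n]

open scoped Classical in
lemma exPer (w : ZMod n → Fin x) : ∃ k, 0 < k ∧ IsPer w k :=
  ⟨n, Nat.pos_of_ne_zero (NeZero.ne n), isPer_n w⟩

open scoped Classical in
/-- Minimal positive period. -/
noncomputable def mp (w : ZMod n → Fin x) : ℕ := Nat.find (exPer w)

open scoped Classical in
lemma mp_pos (w : ZMod n → Fin x) : 0 < mp w := (Nat.find_spec (exPer w)).1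

open scoped Classical in
lemma mp_isPer (w : ZMod n → Fin x) : IsPer w (mp w) := (Nat.find_spec (exPer w)).2

open scoped Classical in
lemma mp_dvd {w : ZMod n → Fin x} {k : ℕ} (hk : IsPer w k) : mp w ∣ k := by
  set m := mp w with hm
  have hr : IsPer w (k % m) := by
    intro i
    have h1 : IsPer w (k / m * m) := isPer_mul (mp_isPer w) _
    have h2 := h1 (i + ((k % m : ℕ) : ZMod n))

    have h3 := hk i
    have hkey : (i + ((k % m : ℕ) : ZMod n)) + ((k / m * m : ℕ) : ZMod n)
        = i + (k : ZMod n) := by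
      rw [add_assoc, ← Nat.cast_add, Nat.mod_add_div']
    rw [hkey] at h2
    rw [← h2, h3]
  rcases Nat.eq_zero_or_pos (k % m) with h | h
  · exact Nat.dvd_of_mod_eq_zero h
  · exfalso
    have := Nat.find_min (exPer w) (Nat.mod_lt k (mp_pos w)) 
    exact this ⟨h, hr⟩

lemma mp_dvd_n (w : ZMod n → Fin x) : mp w ∣ n := mp_dvd (isPer_n w)

lemma isPer_of_dvd {w : ZMod n → Fin x} {k : ℕ} (hk : mp w ∣ k) : IsPer w k := by
  obtain ⟨c, rfl⟩ := hk
  rw [mul_comm]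
  exact isPer_mul (mp_isPer w) c

lemma w_mod (w : ZMod n → Fin x) (a : ℕ) :
    w ((a : ZMod n)) = w ((a % mp w : ℕ) : ZMod n) := by
  have h1 : IsPer w (a / mp w * mp w) := isPer_mul (mp_isPer w) _
  have h2 := h1 ((a % mp w : ℕ) : ZMod n)
  rw [← Nat.cast_add, Nat.mod_add_div'] at h2
  rw [← h2]

/-- Aperiodic words of length `d`. -/
def Aper (d x : ℕ) := {w : ZMod d → Fin x // ∀ c : ZMod d, (∀ i, w (i + c) = w i) → c = 0}

noncomputable instance (d x : ℕ) [NeZero d] : Fintype (Aper d x) := by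
  unfold Aper
  classical
  infer_instance

/-- Natural-number periods vs `ZMod n` periods. -/
lemma isPer_val {w : ZMod n → Fin x} {c : ZMod n} (h : ∀ i, w (i + c) = w i) :
    IsPer w c.val := by
  intro i
  rw [ZMod.natCast_val, ZMod.cast_id]
  exact h i

/-- The forward map: extract the aperiodic word of minimal-period length. -/
noncomputable def extract (w : ZMod n → Fin x) : ZMod (mp w) → Fin x :=
  fun j => w ((j.val : ZMod n))

lemma extract_natCast (w : ZMod n → Fin x) (a : ℕ) :
    extract w ((a : ZMod (mp w))) = w ((a : ZMod n)) := by
  have : NeZero (mp w) := ⟨(mp_pos w).ne'⟩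
  rw [extract, ZMod.val_natCast, ← w_mod w a]

lemma extract_aperiodic (w : ZMod n → Fin x) (c : ZMod (mp w))
    (h : ∀ j, extract w (j + c) = extract w j) : c = 0 := by
  have : NeZero (mp w) := ⟨(mp_pos w).ne'⟩
  have hper : IsPer w c.val := by
    intro i
    have hi : i = ((i.val : ℕ) : ZMod n) := by rw [ZMod.natCast_val, ZMod.cast_id]
    rw [hi, ← Nat.cast_add, ← extract_natCast w _, ← extract_natCast w i.val]
    rw [Nat.cast_add]
    have : ((c.val : ℕ) : ZMod (mp w)) = c := by rw [ZMod.natCast_val, ZMod.cast_id]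
    rw [this]
    exact h _
  have := mp_dvd hper
  have hlt := ZMod.val_lt c
  exact (ZMod.val_eq_zero c).mp (Nat.eq_zero_of_dvd_of_lt this hlt |> fun h => h)

noncomputable def Phi (w : ZMod n → Fin x) : Σ d : n.divisors, Aper d x :=
  ⟨⟨mp w, Nat.mem_divisors.mpr ⟨mp_dvd_n w, NeZero.ne n⟩⟩,
    extract w, extract_aperiodic w⟩

def Psi (s : Σ d : n.divisors, Aper (d : ℕ) x) : ZMod n → Fin x :=
  fun i => s.2.1 (ZMod.castHom (Nat.mem_divisors.mp s.1.2).1 (ZMod (s.1 : ℕ)) i)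

lemma psi_left_inv (w : ZMod n → Fin x) : Psi (Phi w) = w := by
  funext i
  have h0 : Psi (Phi w) i = extract w (ZMod.castHom (mp_dvd_n w) (ZMod (mp w)) i) := rfl
  have hi : i = ((i.val : ℕ) : ZMod n) := by rw [ZMod.natCast_val, ZMod.cast_id]
  rw [h0, hi, map_natCast, extract_natCast]

section PsiLemmas

variable {d : ℕ} (hdn : d ∣ n) (v : ZMod d → Fin x)

lemma psi_per_iff [NeZero d] (hv : ∀ c : ZMod d, (∀ i, v (i + c) = v i) → c = 0) (k : ℕ) :
    IsPer (fun i => v (ZMod.castHom hdn (ZMod d) i)) k ↔ (k : ZMod d) = 0 := by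
  constructor
  · intro h
    apply hv
    intro j
    have hcast : ZMod.castHom hdn (ZMod d) ((j.val : ℕ) : ZMod n) = j := by
      rw [map_natCast, ZMod.natCast_val, ZMod.cast_id]
    have := h ((j.val : ℕ) : ZMod n)
    simp only [map_add, map_natCast, hcast] at this
    exact this
  · intro h i
    simp only [map_add, map_natCast, h, add_zero]

lemma psi_mp [NeZero d] (hv : ∀ c : ZMod d, (∀ i, v (i + c) = v i) → c = 0) :
    mp (fun i => v (ZMod.castHom hdn (ZMod d) i)) = d := by
  set w := fun i => v (ZMod.castHom hdn (ZMod d) i) with hw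
  have h1 : IsPer w d := (psi_per_iff hdn v hv d).mpr (ZMod.natCast_self d)
  have h2 : mp w ∣ d := mp_dvd h1
  have h3 : (mp w : ZMod d) = 0 := (psi_per_iff hdn v hv (mp w)).mp (mp_isPer w)
  have h4 : d ∣ mp w := (ZMod.natCast_eq_zero_iff _ _).mp h3
  exact Nat.dvd_antisymm h2 h4

end PsiLemmas

lemma aper_heq {a b : ℕ} [NeZero a] [NeZero b] (h : a = b) (v : Aper a x) (v' : Aper b x)
    (hj : ∀ j : ℕ, v.1 ((j : ZMod a)) = v'.1 ((j : ZMod b))) : HEq v v' := by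
  subst h
  apply heq_of_eq
  apply Subtype.ext
  funext j
  have := hj j.val
  rwa [ZMod.natCast_val, ZMod.cast_id] at this

lemma psi_right_inv (s : Σ d : n.divisors, Aper (d : ℕ) x) : Phi (Psi s) = s := by
  obtain ⟨⟨d, hd⟩, v, hv⟩ := s
  have hd0 : d ≠ 0 := Nat.pos_of_mem_divisors hd |>.ne'
  have : NeZero d := ⟨hd0⟩
  have hdn : d ∣ n := (Nat.mem_divisors.mp hd).1
  set w : ZMod n → Fin x := Psi ⟨⟨d, hd⟩, v, hv⟩ with hwdef
  have hw : w = fun i => v (ZMod.castHom hdn (ZMod d) i) := rfl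
  have hmp : mp w = d := by rw [hw]; exact psi_mp hdn v hv
  have : NeZero (mp w) := ⟨by rw [hmp]; exact hd0⟩
  apply Sigma.ext
  · exact Subtype.ext hmp
  · show HEq (⟨extract w, extract_aperiodic w⟩ : Aper (mp w) x) (⟨v, hv⟩ : Aper d x)
    apply aper_heq hmp
    intro j
    show extract w ((j : ZMod (mp w))) = v ((j : ZMod d))
    rw [extract_natCast, hw]
    show v (ZMod.castHom hdn (ZMod d) ((j : ℕ) : ZMod n)) = _
    rw [map_natCast]

noncomputable def theEquiv : (ZMod n → Fin x) ≃ Σ d : n.divisors, Aper (d : ℕ) x :=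
  ⟨Phi, Psi, psi_left_inv, psi_right_inv⟩

lemma sum_card (x : ℕ) {n : ℕ} (hn : n ≠ 0) :
    ∑ d ∈ n.divisors, Nat.card (Aper d x) = x ^ n := by
  classical
  have : NeZero n := ⟨hn⟩
  haveI : ∀ d : n.divisors, Fintype (Aper (d : ℕ) x) := fun d =>
    haveI : NeZero (d : ℕ) := ⟨(Nat.pos_of_mem_divisors d.2).ne'⟩
    inferInstance
  calc ∑ d ∈ n.divisors, Nat.card (Aper d x)
      = ∑ d : n.divisors, Nat.card (Aper (d : ℕ) x) := (Finset.sum_coe_sort _ _).symm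
    _ = Nat.card (Σ d : n.divisors, Aper (d : ℕ) x) := by
        rw [Nat.card_eq_fintype_card, Fintype.card_sigma]
        refine Finset.sum_congr rfl fun d _ => ?_
        rw [Nat.card_eq_fintype_card]
    _ = Nat.card (ZMod n → Fin x) := Nat.card_congr (theEquiv (x := x)).symm
    _ = x ^ n := by simp [Nat.card_eq_fintype_card, ZMod.card]

end AperiodicCount

/-- For `n ≥ 1` and `x ≥ 0`, the number of aperiodic words of length `n` over an alphabet of
`x` letters equals `M_n(x) = Σ_{d ∣ n} μ(n/d)·x^d`. A word `w : ZMod n → Fin x` is aperiodic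
if the only rotation fixing it is trivial. -/
theorem card_aperiodic_words (n : ℕ) (hn : 1 ≤ n) (x : ℕ) :
    (Nat.card {w : ZMod n → Fin x //
        ∀ d : ZMod n, (∀ i : ZMod n, w (i + d) = w i) → d = 0} : ℤ) =
      ∑ d ∈ n.divisors, μ (n / d) * (x : ℤ) ^ d := by
  have key : ∀ m > 0, ∑ i ∈ m.divisors, ((Nat.card (AperiodicCount.Aper i x) : ℤ)) = (x : ℤ) ^ m := by
    intro m hm
    have h := AperiodicCount.sum_card x hm.ne'
    exact_mod_cast congrArg (Nat.cast : ℕ → ℤ) h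
  have h2 := (ArithmeticFunction.sum_eq_iff_sum_mul_moebius_eq
    (f := fun i => (Nat.card (AperiodicCount.Aper i x) : ℤ))
    (g := fun m => (x : ℤ) ^ m)).mp key n (by omega)
  show (Nat.card (AperiodicCount.Aper n x) : ℤ) = _
  rw [← h2, ← Nat.sum_divisorsAntidiagonal' (f := fun a b => (μ a : ℤ) * (x : ℤ) ^ b)]
  push_cast
  rfl
end

section
/- For all integers n ≥ 1 and x ≥ 0, the sum over all positive divisors d of n of the number of aperiodic words of length d over an alphabet of x letters equals x^n. -/
namespace SumAperAux

/-- Aperiodic words of length `d` over `x` letters. -/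
abbrev Aper (d x : ℕ) : Type :=
  {w : ZMod d → Fin x // ∀ e : ZMod d, (∀ i : ZMod d, w (i + e) = w i) → e = 0}

/-- The integer periods of a word form an additive subgroup of `ℤ`. -/
def periodsZ {n x : ℕ} (w : ZMod n → Fin x) : AddSubgroup ℤ where
  carrier := {m : ℤ | ∀ i : ZMod n, w (i + (m : ZMod n)) = w i}
  zero_mem' := by intro i; simp
  add_mem' := by
    intro a b ha hb i
    have : ((a + b : ℤ) : ZMod n) = (a : ZMod n) + (b : ZMod n) := by push_cast; ring
    rw [this, ← add_assoc, hb, ha]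
  neg_mem' := by
    intro a ha i
    have := ha (i + ((-a : ℤ) : ZMod n))
    have hc : ((-a : ℤ) : ZMod n) + (a : ZMod n) = 0 := by push_cast; ring
    rw [add_assoc, hc, add_zero] at this
    exact this.symm

/-- The gluing map from aperiodic words of lengths the divisors of `n` to words of length `n`. -/
def F (n x : ℕ) (p : Σ d : {d : ℕ // d ∈ n.divisors}, Aper d x) : ZMod n → Fin x :=
  fun i => p.2.1 (ZMod.castHom (Nat.dvd_of_mem_divisors p.1.2) (ZMod p.1) i)

lemma castHom_surj {n d : ℕ} [NeZero d] (h : d ∣ n) :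
    Function.Surjective (ZMod.castHom h (ZMod d)) := by
  intro j
  refine ⟨((j.val : ℕ) : ZMod n), ?_⟩
  rw [map_natCast]
  exact ZMod.natCast_rightInverse j

lemma F_inj {n x : ℕ} : Function.Injective (F n x) := by
  rintro ⟨⟨d₁, hd₁⟩, w₁, h₁⟩ ⟨⟨d₂, hd₂⟩, w₂, h₂⟩ h
  have hdvd₁ : d₁ ∣ n := Nat.dvd_of_mem_divisors hd₁
  have hdvd₂ : d₂ ∣ n := Nat.dvd_of_mem_divisors hd₂
  haveI : NeZero d₁ := ⟨(Nat.pos_of_mem_divisors hd₁).ne'⟩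
  haveI : NeZero d₂ := ⟨(Nat.pos_of_mem_divisors hd₂).ne'⟩
  set φ₁ := ZMod.castHom hdvd₁ (ZMod d₁) with hφ₁
  set φ₂ := ZMod.castHom hdvd₂ (ZMod d₂) with hφ₂
  have happ : ∀ i : ZMod n, w₁ (φ₁ i) = w₂ (φ₂ i) := fun i => congrFun h i
  have key : ∀ e : ZMod n, φ₁ e = 0 → φ₂ e = 0 := by
    intro e he
    apply h₂
    intro j
    obtain ⟨i, rfl⟩ := castHom_surj hdvd₂ j
    calc w₂ (φ₂ i + φ₂ e) = w₂ (φ₂ (i + e)) := by rw [map_add]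
      _ = w₁ (φ₁ (i + e)) := (happ _).symm
      _ = w₁ (φ₁ i + φ₁ e) := by rw [map_add]
      _ = w₁ (φ₁ i) := by rw [he, add_zero]
      _ = w₂ (φ₂ i) := happ i
  have key' : ∀ e : ZMod n, φ₂ e = 0 → φ₁ e = 0 := by
    intro e he
    apply h₁
    intro j
    obtain ⟨i, rfl⟩ := castHom_surj hdvd₁ j
    calc w₁ (φ₁ i + φ₁ e) = w₁ (φ₁ (i + e)) := by rw [map_add]
      _ = w₂ (φ₂ (i + e)) := happ _
      _ = w₂ (φ₂ i + φ₂ e) := by rw [map_add]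
      _ = w₂ (φ₂ i) := by rw [he, add_zero]
      _ = w₁ (φ₁ i) := (happ i).symm
  have hd21 : d₂ ∣ d₁ := by
    have h0 := key ((d₁ : ℕ) : ZMod n) (by rw [map_natCast, ZMod.natCast_self])
    rw [map_natCast] at h0
    exact (ZMod.natCast_eq_zero_iff _ _).mp h0
  have hd12 : d₁ ∣ d₂ := by
    have h0 := key' ((d₂ : ℕ) : ZMod n) (by rw [map_natCast, ZMod.natCast_self])
    rw [map_natCast] at h0
    exact (ZMod.natCast_eq_zero_iff _ _).mp h0
  have hd : d₁ = d₂ := Nat.dvd_antisymm hd12 hd21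
  subst hd
  have hw : w₁ = w₂ := by
    funext j
    obtain ⟨i, rfl⟩ := castHom_surj hdvd₁ j
    exact happ i
  subst hw
  rfl

lemma F_surj {n x : ℕ} (hn : n ≠ 0) : Function.Surjective (F n x) := by
  haveI : NeZero n := ⟨hn⟩
  intro w
  obtain ⟨a, hS⟩ := Int.subgroup_cyclic (periodsZ w)
  have hmem : ∀ m : ℤ, (∀ i : ZMod n, w (i + (m : ZMod n)) = w i) ↔ a ∣ m := by
    intro m
    have : m ∈ periodsZ w ↔ m ∈ AddSubgroup.closure {a} := by rw [hS]
    rw [← AddSubgroup.zmultiples_eq_closure, Int.mem_zmultiples_iff] at this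
    exact this
  have hna : a ∣ (n : ℤ) := by
    rw [← hmem]
    intro i
    have : (((n : ℤ) : ZMod n)) = 0 := by push_cast; exact ZMod.natCast_self n
    rw [this, add_zero]
  set d := a.natAbs with hdd
  have hd : d ∣ n := by
    have := Int.natAbs_dvd_natAbs.mpr hna
    simpa using this
  have hd0 : d ≠ 0 := by
    intro h0
    apply hn
    have ha0 : a = 0 := Int.natAbs_eq_zero.mp h0
    rw [ha0] at hna
    exact_mod_cast Int.zero_dvd.mp hna
  haveI : NeZero d := ⟨hd0⟩
  set φ := ZMod.castHom hd (ZMod d) with hφ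
  have hkey : ∀ e : ZMod n, (∀ i : ZMod n, w (i + e) = w i) ↔ φ e = 0 := by
    intro e
    obtain ⟨m, rfl⟩ := ZMod.intCast_surjective e
    rw [hmem m]
    rw [hφ, map_intCast]
    rw [ZMod.intCast_zmod_eq_zero_iff_dvd]
    exact Int.natAbs_dvd.symm
  set g : ZMod d → ZMod n := fun j => ((j.val : ℕ) : ZMod n) with hg'
  have hg : ∀ j : ZMod d, φ (g j) = j := by
    intro j
    rw [hφ, hg']
    simp only [map_natCast]
    exact ZMod.natCast_rightInverse j
  have hw' : ∀ i : ZMod n, w (g (φ i)) = w i := by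
    intro i
    have h0 : φ (g (φ i) - i) = 0 := by rw [map_sub, hg, sub_self]
    have := (hkey _).mpr h0 i
    rwa [add_sub_cancel] at this
  set w' : ZMod d → Fin x := fun j => w (g j) with hw''
  have haper : ∀ e' : ZMod d, (∀ j : ZMod d, w' (j + e') = w' j) → e' = 0 := by
    intro e' he'
    have hper : ∀ i : ZMod n, w (i + g e') = w i := by
      intro i
      calc w (i + g e') = w (g (φ (i + g e'))) := (hw' _).symm
        _ = w' (φ i + e') := by rw [map_add, hg]
        _ = w' (φ i) := he' _
        _ = w i := hw' i
    have h0 := (hkey (g e')).mp hper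
    rwa [hg] at h0
  refine ⟨⟨⟨d, Nat.mem_divisors.mpr ⟨hd, hn⟩⟩, ⟨w', haper⟩⟩, ?_⟩
  funext i
  exact hw' i

end SumAperAux

/-- For `n ≥ 1` and `x ≥ 0`, summing over the positive divisors `d` of `n` the number of
aperiodic words of length `d` over an alphabet of `x` letters gives `x^n`. -/
theorem sum_card_aperiodic_words (n : ℕ) (hn : 1 ≤ n) (x : ℕ) :
    ∑ d ∈ n.divisors, Nat.card {w : ZMod d → Fin x //
        ∀ e : ZMod d, (∀ i : ZMod d, w (i + e) = w i) → e = 0} = x ^ n := by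
  classical
  have hn0 : n ≠ 0 := Nat.one_le_iff_ne_zero.mp hn
  haveI : NeZero n := ⟨hn0⟩
  haveI instAper : ∀ d : {d : ℕ // d ∈ n.divisors}, Fintype (SumAperAux.Aper (d : ℕ) x) :=
    fun d => by
      haveI : NeZero (d : ℕ) := ⟨(Nat.pos_of_mem_divisors d.2).ne'⟩
      exact Fintype.ofFinite _
  have hbij : Function.Bijective (SumAperAux.F n x) :=
    ⟨SumAperAux.F_inj, SumAperAux.F_surj hn0⟩
  have hcard : Nat.card (Σ d : {d : ℕ // d ∈ n.divisors}, SumAperAux.Aper d x)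
      = Nat.card (ZMod n → Fin x) := Nat.card_congr (Equiv.ofBijective _ hbij)
  rw [Nat.card_eq_fintype_card, Nat.card_eq_fintype_card, Fintype.card_sigma] at hcard
  show ∑ d ∈ n.divisors, Nat.card (SumAperAux.Aper d x) = x ^ n
  rw [← Finset.sum_coe_sort n.divisors (fun d => Nat.card (SumAperAux.Aper d x))]
  simp only [Nat.card_eq_fintype_card]
  rw [hcard, Fintype.card_fun, ZMod.card, Fintype.card_fin]
end

section
/- For every integer n ≥ 1 and every integer x (positive, negative, or zero), n divides M_n(x) = Σ_{d | n} μ(n/d)·x^d. -/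
open ArithmeticFunction ArithmeticFunction.Moebius

/-- Reindexing a sum over the divisors of a product of coprime numbers. -/
lemma sum_divisors_coprime_mul_aux {m n : ℕ} (hm : m ≠ 0) (hn : n ≠ 0)
    (h : m.Coprime n) (f : ℕ → ℤ) :
    ∑ d ∈ (m * n).divisors, f d = ∑ a ∈ m.divisors, ∑ b ∈ n.divisors, f (a * b) := by
  rw [← Finset.sum_product']
  refine Finset.sum_nbij' (fun d => (d.gcd m, d.gcd n)) (fun p => p.1 * p.2) ?_ ?_ ?_ ?_ ?_
  · intro d hd
    rw [Nat.mem_divisors] at hd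
    simp only [Finset.mem_product, Nat.mem_divisors]
    exact ⟨⟨Nat.gcd_dvd_right _ _, hm⟩, ⟨Nat.gcd_dvd_right _ _, hn⟩⟩
  · intro p hp
    simp only [Finset.mem_product, Nat.mem_divisors] at hp
    exact Nat.mem_divisors.mpr ⟨mul_dvd_mul hp.1.1 hp.2.1, mul_ne_zero hm hn⟩
  · intro d hd
    rw [Nat.mem_divisors] at hd
    exact (Nat.gcd_mul_gcd_eq_iff_dvd_mul_of_coprime h).mpr hd.1
  · intro p hp
    simp only [Finset.mem_product, Nat.mem_divisors] at hp
    obtain ⟨⟨ha, -⟩, ⟨hb, -⟩⟩ := hp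
    have hbm : (p.2).Coprime m := Nat.Coprime.coprime_dvd_left hb h.symm
    have han : (p.1).Coprime n := Nat.Coprime.coprime_dvd_left ha h
    have h1 : (p.1 * p.2).gcd m = p.1 := by
      apply Nat.dvd_antisymm
      · exact (Nat.Coprime.coprime_dvd_left (Nat.gcd_dvd_right _ _) hbm.symm).dvd_of_dvd_mul_right
          (Nat.gcd_dvd_left _ _)
      · exact Nat.dvd_gcd (dvd_mul_right _ _) ha
    have h2 : (p.1 * p.2).gcd n = p.2 := by
      apply Nat.dvd_antisymm
      · exact (Nat.Coprime.coprime_dvd_left (Nat.gcd_dvd_right _ _) han.symm).dvd_of_dvd_mul_left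
          (Nat.gcd_dvd_left _ _)
      · exact Nat.dvd_gcd (dvd_mul_left _ _) hb
    simp [h1, h2]
  · intro d hd
    rw [Nat.mem_divisors] at hd
    rw [(Nat.gcd_mul_gcd_eq_iff_dvd_mul_of_coprime h).mpr hd.1]

/-- Fermat's little theorem for integers, difference form. -/
lemma int_dvd_pow_card_sub_self {p : ℕ} (hp : p.Prime) (y : ℤ) : (p : ℤ) ∣ y ^ p - y := by
  haveI : Fact p.Prime := ⟨hp⟩
  rw [← ZMod.intCast_zmod_eq_zero_iff_dvd]
  push_cast
  rw [ZMod.pow_card, sub_self]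

/-- Key prime-power lemma. -/
lemma key_prime_pow {p : ℕ} (hp : p.Prime) (b m : ℕ) (hm : m ≠ 0)
    (hcop : (p ^ (b + 1)).Coprime m) (x : ℤ) :
    ((p : ℤ) ^ (b + 1)) ∣
      ∑ d ∈ (p ^ (b + 1) * m).divisors, μ ((p ^ (b + 1) * m) / d) * x ^ d := by
  have hp1 := hp.one_lt
  rw [sum_divisors_coprime_mul_aux (pow_ne_zero _ hp.pos.ne') hm hcop]
  have hstep : ∀ i ∈ (p ^ (b + 1)).divisors, ∀ e ∈ m.divisors,
      (μ ((p ^ (b + 1) * m) / (i * e)) : ℤ) * x ^ (i * e)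
        = (μ ((p ^ (b + 1)) / i) : ℤ) * (μ (m / e) : ℤ) * x ^ (i * e) := by
    intro i hi e he
    rw [Nat.mem_divisors] at hi he
    have h1 : (p ^ (b + 1) * m) / (i * e) = (p ^ (b + 1) / i) * (m / e) :=
      (Nat.div_mul_div_comm hi.1 he.1).symm
    have hcop2 : (p ^ (b + 1) / i).Coprime (m / e) :=
      Nat.Coprime.coprime_dvd_left (Nat.div_dvd_of_dvd hi.1)
        (Nat.Coprime.coprime_dvd_right (Nat.div_dvd_of_dvd he.1) hcop)
    rw [h1, isMultiplicative_moebius.map_mul_of_coprime hcop2]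
  rw [Finset.sum_congr rfl (fun i hi => Finset.sum_congr rfl (fun e he => hstep i hi e he))]
  rw [Nat.sum_divisors_prime_pow hp]
  have hmu : ∀ k ∈ Finset.range (b + 2),
      ∀ e ∈ m.divisors, (μ (p ^ (b + 1) / p ^ k) : ℤ) * (μ (m / e)) * x ^ (p ^ k * e)
        = (μ (p ^ ((b + 1) - k)) : ℤ) * (μ (m / e)) * x ^ (p ^ k * e) := by
    intro k hk e _
    rw [Finset.mem_range] at hk
    rw [Nat.pow_div (by omega) hp.pos]
  rw [Finset.sum_congr rfl (fun k hk => Finset.sum_congr rfl (fun e he => hmu k hk e he))]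
  -- split off the last two terms
  rw [Finset.sum_range_succ, Finset.sum_range_succ]
  have hzero : ∑ k ∈ Finset.range b, ∑ e ∈ m.divisors,
      (μ (p ^ ((b + 1) - k)) : ℤ) * (μ (m / e)) * x ^ (p ^ k * e) = 0 := by
    apply Finset.sum_eq_zero
    intro k hk
    rw [Finset.mem_range] at hk
    apply Finset.sum_eq_zero
    intro e _
    rw [moebius_apply_prime_pow hp (by omega), if_neg (by omega)]
    simp
  rw [hzero, zero_add, ← Finset.sum_add_distrib]
  apply Finset.dvd_sum
  intro e he
  rw [Nat.mem_divisors] at he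
  have h1 : (b + 1) - b = 1 := by omega
  have h2 : (b + 1) - (b + 1) = 0 := by omega
  rw [h1, h2, pow_zero, pow_one, moebius_apply_prime hp, moebius_apply_one]
  have hterm : (((-1 : ℤ) : ℤ) * (μ (m / e)) * x ^ (p ^ b * e)
      + ((1 : ℤ)) * (μ (m / e)) * x ^ (p ^ (b + 1) * e))
      = (μ (m / e) : ℤ) * ((x ^ (p * e)) ^ p ^ b - (x ^ e) ^ p ^ b) := by
    rw [← pow_mul, ← pow_mul]
    have e1 : p * e * p ^ b = p ^ (b + 1) * e := by ring
    have e2 : e * p ^ b = p ^ b * e := by ring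
    rw [e1, e2]
    ring
  rw [hterm]
  apply Dvd.dvd.mul_left
  have hdvd : (p : ℤ) ∣ x ^ (p * e) - x ^ e := by
    have := int_dvd_pow_card_sub_self hp (x ^ e)
    rwa [← pow_mul, mul_comm e p] at this
  simpa using dvd_sub_pow_of_dvd_sub hdvd b

/-- For every `n ≥ 1` and every integer `x`, `n` divides `M_n(x) = Σ_{d ∣ n} μ(n/d)·x^d`. -/
theorem dvd_mobiusPolynomial_eval (n : ℕ) (hn : 1 ≤ n) (x : ℤ) :
    (n : ℤ) ∣ ∑ d ∈ n.divisors, μ (n / d) * x ^ d := by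
  have hn0 : n ≠ 0 := by omega
  have hfact : ∏ p ∈ n.primeFactors, p ^ n.factorization p = n :=
    Nat.factorization_prod_pow_eq_self hn0
  have : (n : ℤ) = ∏ p ∈ n.primeFactors, (p : ℤ) ^ n.factorization p := by
    conv_lhs => rw [← hfact]
    push_cast
    rfl
  rw [this]
  apply Finset.prod_dvd_of_coprime
  · intro p hp q hq hpq
    have hp' := Nat.prime_of_mem_primeFactors hp
    have hq' := Nat.prime_of_mem_primeFactors hq
    have : Nat.Coprime (p ^ n.factorization p) (q ^ n.factorization q) :=
      Nat.Coprime.pow _ _ ((Nat.coprime_primes hp' hq').mpr hpq)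
    have := Nat.isCoprime_iff_coprime.mpr this
    simpa using this
  · intro p hp
    have hp' := Nat.prime_of_mem_primeFactors hp
    set a := n.factorization p with ha
    have ha1 : 1 ≤ a := (Nat.Prime.factorization_pos_of_dvd hp' hn0
      (Nat.dvd_of_mem_primeFactors hp))
    obtain ⟨b, hb⟩ : ∃ b, a = b + 1 := ⟨a - 1, by omega⟩
    have hsplit : p ^ a * (n / p ^ a) = n := Nat.ordProj_mul_ordCompl_eq_self n p
    have hm : n / p ^ a ≠ 0 := (Nat.ordCompl_pos p hn0).ne'
    have hcop : (p ^ a).Coprime (n / p ^ a) :=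
      Nat.Coprime.pow_left _ (Nat.coprime_ordCompl hp' hn0)
    have := key_prime_pow hp' b (n / p ^ a) hm (hb ▸ hcop) x
    rw [← hb] at this
    rw [hsplit] at this
    exact this
end

section
/- Let F be a finite field with q elements and let n ≥ 1 be an integer. Then n times the number of monic irreducible polynomials of degree n in F[X] equals M_n(q) = Σ_{d | n} μ(n/d)·q^d. In particular, for F = ℤ/pℤ with p prime, the number of monic irreducible polynomials of degree n over 𝔽_p is (1/n)·Σ_{d | n} μ(n/d)·p^d. -/
open ArithmeticFunction
open scoped ArithmeticFunction.Moebius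

open Polynomial UniqueFactorizationMonoid Finset in
private lemma aux_pow_sub_one_dvd {q d m : ℕ} (hq : 2 ≤ q) (hd : 0 < d)
    (h : q ^ d - 1 ∣ q ^ m - 1) : d ∣ m := by
  have hq1 : 1 ≤ q ^ d := Nat.one_le_pow _ _ (by omega)
  have hmod : (1 : ℕ) ≡ q ^ d [MOD q ^ d - 1] := (Nat.modEq_iff_dvd' hq1).2 dvd_rfl
  have hm1 : (1 : ℕ) ≡ q ^ m [MOD q ^ d - 1] :=
    (Nat.modEq_iff_dvd' (Nat.one_le_pow _ _ (by omega))).2 h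
  set r := m % d with hr
  have hrd : r < d := Nat.mod_lt _ hd
  have hqm : q ^ m = (q ^ d) ^ (m / d) * q ^ r := by
    rw [← pow_mul, ← pow_add]
    congr 1
    exact (Nat.div_add_mod m d).symm
  have hmr : (1 : ℕ) ≡ q ^ r [MOD q ^ d - 1] := by
    calc (1 : ℕ) ≡ q ^ m [MOD q ^ d - 1] := hm1
    _ = (q ^ d) ^ (m / d) * q ^ r := hqm
    _ ≡ 1 ^ (m / d) * q ^ r [MOD q ^ d - 1] := ((hmod.symm.pow _).mul_right _)
    _ = q ^ r := by rw [one_pow, one_mul]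
  have hdvd : q ^ d - 1 ∣ q ^ r - 1 :=
    (Nat.modEq_iff_dvd' (Nat.one_le_pow _ _ (by omega))).1 hmr
  have hlt : q ^ r - 1 < q ^ d - 1 := by
    have h1 : q ^ r < q ^ d := Nat.pow_lt_pow_right (by omega : 1 < q) hrd
    have h2 : 1 ≤ q ^ r := Nat.one_le_pow _ _ (by omega)
    omega
  have hr0 : q ^ r - 1 = 0 := Nat.eq_zero_of_dvd_of_lt hdvd hlt
  have : q ^ r = 1 := by
    have := Nat.one_le_pow r q (by omega)
    omega
  have : r = 0 := by
    rcases Nat.eq_zero_or_pos r with h0 | hpos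
    · exact h0
    · exact absurd this (by
        have := Nat.pow_lt_pow_right (by omega : 1 < q) hpos
        simpa using this.ne')
  exact Nat.dvd_of_mod_eq_zero this

open Polynomial UniqueFactorizationMonoid Finset in
private lemma aux_dvd_iff (q m : ℕ) (F : Type) [Field F] [Fintype F]
    (hF : Fintype.card F = q) (hm : 1 ≤ m) (g : F[X]) (hg : g.Monic) (hirr : Irreducible g) :
    g ∣ (X ^ q ^ m - X : F[X]) ↔ g.natDegree ∣ m := by
  have hq : 2 ≤ q := hF ▸ Fintype.one_lt_card
  haveI := Fact.mk hirr
  set d := g.natDegree with hd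
  have hdpos : 0 < d := hirr.natDegree_pos
  let K := AdjoinRoot g
  have hg0 : g ≠ 0 := hg.ne_zero
  let pb : PowerBasis F K := AdjoinRoot.powerBasis hg0
  haveI : Module.Finite F K := pb.finite
  haveI : Finite K := Module.finite_of_finite F
  haveI : Fintype K := Fintype.ofFinite K
  have hcardK : Fintype.card K = q ^ d := by
    rw [Module.card_eq_pow_finrank (K := F) (V := K), pb.finrank, AdjoinRoot.powerBasis_dim, hF]
  set α := AdjoinRoot.root g with hα
  have hmin : minpoly F α = g := by
    rw [AdjoinRoot.minpoly_root hg0, hg.leadingCoeff, inv_one, map_one, mul_one]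
  have haeval : (aeval α) g = 0 := by
    have := minpoly.aeval F α
    rwa [hmin] at this
  constructor
  · intro hdvd
    -- α ^ q ^ m = α
    have hroot : α ^ q ^ m = α := by
      obtain ⟨c, hc⟩ := hdvd
      have : (aeval α) (X ^ q ^ m - X : F[X]) = 0 := by
        rw [hc, map_mul, haeval, zero_mul]
      simpa [sub_eq_zero] using this
    -- every element of K is fixed by x ↦ x ^ q ^ m
    obtain ⟨p, hp⟩ := CharP.exists F
    haveI := hp
    obtain ⟨s, hps, hcard⟩ := FiniteField.card F p
    haveI hpp := Fact.mk hps
    haveI : CharP K p := charP_of_injective_algebraMap (algebraMap F K).injective p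
    have hqm : q ^ m = p ^ ((s : ℕ) * m) := by
      rw [hF] at hcard; rw [hcard, ← pow_mul]
    have hall : ∀ x : K, x ^ q ^ m = x := by
      intro x
      have hx : x ∈ Algebra.adjoin F {α} := by
        rw [AdjoinRoot.adjoinRoot_eq_top]; trivial
      induction hx using Algebra.adjoin_induction with
      | mem x hx => rw [Set.mem_singleton_iff] at hx; rw [hx]; exact hroot
      | algebraMap a =>
          rw [← map_pow]
          congr 1
          rw [← hF]; exact FiniteField.pow_card_pow m a
      | add x y hx hy ihx ihy => rw [hqm] at ihx ihy ⊢; rw [add_pow_char_pow, ihx, ihy]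
      | mul x y hx hy ihx ihy => rw [mul_pow, ihx, ihy]
    -- take a generator of Kˣ
    obtain ⟨u, hu⟩ := IsCyclic.exists_generator (α := Kˣ)
    have horder : orderOf u = q ^ d - 1 := by
      rw [orderOf_eq_card_of_forall_mem_zpowers hu, Nat.card_eq_fintype_card,
        Fintype.card_units, hcardK]
    have hu1 : u ^ (q ^ m - 1) = 1 := by
      have h1 : (u : K) ^ q ^ m = (u : K) := hall u
      have h2 : u ^ q ^ m = u := Units.ext (by push_cast; exact h1)
      have h3 : u ^ (q ^ m - 1 + 1) = u ^ 1 := by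
        rw [Nat.sub_add_cancel (Nat.one_le_pow _ _ (by omega)), h2, pow_one]
      calc u ^ (q ^ m - 1) = u ^ (q ^ m - 1) * u * u⁻¹ := by group
        _ = u ^ (q ^ m - 1 + 1) * u⁻¹ := by rw [pow_succ]
        _ = u * u⁻¹ := by rw [h3, pow_one]
        _ = 1 := mul_inv_cancel u
    have hdvd' : q ^ d - 1 ∣ q ^ m - 1 := horder ▸ orderOf_dvd_of_pow_eq_one hu1
    exact aux_pow_sub_one_dvd hq hdpos hdvd'
  · intro hdm
    obtain ⟨k, hk⟩ := hdm
    have hroot : α ^ q ^ m = α := by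
      have : q ^ m = (q ^ d) ^ k := by rw [← pow_mul, hk]
      rw [this, ← hcardK]
      exact FiniteField.pow_card_pow k α
    have : (aeval α) (X ^ q ^ m - X : F[X]) = 0 := by
      simp [hroot]
    have := minpoly.dvd F α this
    rwa [hmin] at this

open Polynomial UniqueFactorizationMonoid Finset in
private lemma aux_count (q : ℕ) (F : Type) [Field F] [Fintype F] (hF : Fintype.card F = q)
    (m : ℕ) (hm : 0 < m) :
    ∑ d ∈ m.divisors,
      d * Nat.card {f : Polynomial F // f.Monic ∧ Irreducible f ∧ f.natDegree = d} = q ^ m := by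
  classical
  have hq : 2 ≤ q := hF ▸ Fintype.one_lt_card
  set P : F[X] := X ^ q ^ m - X with hP
  have hq1m : 1 < q ^ m := Nat.one_lt_pow hm.ne' (by omega)
  have hP0 : P ≠ 0 := FiniteField.X_pow_card_sub_X_ne_zero F hq1m
  have hPdeg : P.natDegree = q ^ m := FiniteField.X_pow_card_sub_X_natDegree_eq F hq1m
  have hPmonic : P.Monic := by
    apply (monic_X_pow (q ^ m)).sub_of_left
    rw [degree_X_pow, degree_X]
    exact_mod_cast hq1m
  obtain ⟨p, hp⟩ := CharP.exists F
  haveI := hp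
  obtain ⟨s, hps, hcard⟩ := FiniteField.card F p
  haveI := Fact.mk hps
  have hpq : p ∣ q := by
    rw [← hF, hcard]
    exact dvd_pow_self p s.ne_zero
  have hsep : P.Separable := galois_poly_separable p (q ^ m) (hpq.trans (dvd_pow_self q hm.ne'))
  have hsq : Squarefree P := hsep.squarefree
  have hnodup : (normalizedFactors P).Nodup := (squarefree_iff_nodup_normalizedFactors hP0).1 hsq
  set D : Finset F[X] := (normalizedFactors P).toFinset with hD
  have hmem : ∀ g : F[X], g ∈ D ↔ g.Monic ∧ Irreducible g ∧ g ∣ P := by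
    intro g
    constructor
    · intro hgD
      rw [hD, Multiset.mem_toFinset] at hgD
      have hgn : g ≠ 0 := fun h => zero_notMem_normalizedFactors P (h ▸ hgD)
      have hmon : (normalize g).Monic := monic_normalize hgn
      rw [normalize_normalized_factor g hgD] at hmon
      exact ⟨hmon, irreducible_of_normalized_factor g hgD, dvd_of_mem_normalizedFactors hgD⟩
    · rintro ⟨hmon, hirr, hdvd⟩
      obtain ⟨g', hg'mem, hassoc⟩ := exists_mem_normalizedFactors_of_dvd hP0 hirr hdvd
      have hg'n : g' ≠ 0 := fun h => zero_notMem_normalizedFactors P (h ▸ hg'mem)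
      have hg'mon : g'.Monic := by
        have := monic_normalize hg'n
        rwa [normalize_normalized_factor g' hg'mem] at this
      rw [hD, Multiset.mem_toFinset]
      rwa [eq_of_monic_of_associated hmon hg'mon hassoc]
  have hprod : (normalizedFactors P).prod = P := by
    have hassoc := prod_normalizedFactors hP0
    have hmon : (normalizedFactors P).prod.Monic := by
      have := monic_multiset_prod_of_monic (normalizedFactors P) id
        (fun g hg => ((hmem g).1 (Multiset.mem_toFinset.2 hg)).1)
      simpa using this
    exact eq_of_monic_of_associated hmon hPmonic hassoc
  have hsum : ∑ g ∈ D, g.natDegree = q ^ m := by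
    have h0 : (0 : F[X]) ∉ normalizedFactors P := zero_notMem_normalizedFactors P
    have hnd := natDegree_multiset_prod (normalizedFactors P) h0
    rw [hprod, hPdeg] at hnd
    have hval : D.val = normalizedFactors P := by
      rw [hD, Multiset.toFinset_val, Multiset.dedup_eq_self.2 hnodup]
    rw [Finset.sum, hval]
    exact hnd.symm
  have hmap : ∀ g ∈ D, g.natDegree ∈ m.divisors := by
    intro g hg
    obtain ⟨hmon, hirr, hdvd⟩ := (hmem g).1 hg
    rw [Nat.mem_divisors]
    exact ⟨(aux_dvd_iff q m F hF hm g hmon hirr).1 hdvd, hm.ne'⟩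
  have hfiber := Finset.sum_fiberwise_of_maps_to hmap (fun g => g.natDegree)
  rw [hsum] at hfiber
  rw [← hfiber]
  apply Finset.sum_congr rfl
  intro d hd
  rw [Nat.mem_divisors] at hd
  rw [Finset.sum_congr rfl (fun g hg => (Finset.mem_filter.1 hg).2), Finset.sum_const,
    smul_eq_mul]
  have hsetEq : {f : F[X] | f.Monic ∧ Irreducible f ∧ f.natDegree = d} =
      ↑(D.filter (fun g => g.natDegree = d)) := by
    ext g
    simp only [Set.mem_setOf_eq, Finset.coe_filter, Set.mem_setOf_eq, hmem]
    constructor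
    · rintro ⟨hmon, hirr, hdeg⟩
      exact ⟨⟨hmon, hirr, (aux_dvd_iff q m F hF hm g hmon hirr).2 (hdeg ▸ hd.1)⟩, hdeg⟩
    · rintro ⟨⟨hmon, hirr, _⟩, hdeg⟩
      exact ⟨hmon, hirr, hdeg⟩
  have hcardEq : Nat.card {f : F[X] // f.Monic ∧ Irreducible f ∧ f.natDegree = d} =
      (D.filter (fun g => g.natDegree = d)).card := by
    calc Nat.card {f : F[X] // f.Monic ∧ Irreducible f ∧ f.natDegree = d}
        = Nat.card {f : F[X] | f.Monic ∧ Irreducible f ∧ f.natDegree = d} := rfl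
      _ = Set.ncard {f : F[X] | f.Monic ∧ Irreducible f ∧ f.natDegree = d} :=
          Nat.card_coe_set_eq _
      _ = (D.filter (fun g => g.natDegree = d)).card := by
          rw [hsetEq, Set.ncard_coe_finset]
  rw [hcardEq, Nat.mul_comm]

private lemma aux_main (q n : ℕ) (hn : 1 ≤ n) (F : Type) [Field F] [Fintype F]
    (hF : Fintype.card F = q) :
    (n : ℤ) * Nat.card {f : Polynomial F // f.Monic ∧ Irreducible f ∧ f.natDegree = n} =
      ∑ d ∈ n.divisors, μ (n / d) * (q : ℤ) ^ d := by
  have key : ∀ m : ℕ, 0 < m → ∑ d ∈ m.divisors,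
      ((d : ℤ) * Nat.card {f : Polynomial F // f.Monic ∧ Irreducible f ∧ f.natDegree = d}) =
        (q : ℤ) ^ m := by
    intro m hm
    have := aux_count q F hF m hm
    exact_mod_cast this
  have hinv := (sum_eq_iff_sum_mul_moebius_eq (R := ℤ)
    (f := fun d => (d : ℤ) *
      Nat.card {f : Polynomial F // f.Monic ∧ Irreducible f ∧ f.natDegree = d})
    (g := fun m => (q : ℤ) ^ m)).mp key n hn
  rw [← hinv]
  exact Nat.sum_divisorsAntidiagonal' (f := fun a b => (μ a : ℤ) * (q : ℤ) ^ b)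

/-- Let `F` be a finite field with `q` elements and `n ≥ 1`. Then `n` times the number of
monic irreducible polynomials of degree `n` over `F` equals `M_n(q) = Σ_{d ∣ n} μ(n/d)·q^d`.
In particular, for `F = ℤ/pℤ` with `p` prime, the number of monic irreducible polynomials of
degree `n` over `𝔽_p` is `(1/n)·Σ_{d ∣ n} μ(n/d)·p^d`. -/
theorem card_monic_irreducible_eq (q n : ℕ) (hn : 1 ≤ n) :
    (∀ (F : Type) [Field F] [Fintype F], Fintype.card F = q →
      (n : ℤ) * Nat.card {f : Polynomial F // f.Monic ∧ Irreducible f ∧ f.natDegree = n} =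
        ∑ d ∈ n.divisors, μ (n / d) * (q : ℤ) ^ d) ∧
    ∀ p : ℕ, p.Prime →
      (Nat.card {f : Polynomial (ZMod p) // f.Monic ∧ Irreducible f ∧ f.natDegree = n} : ℤ) =
        (∑ d ∈ n.divisors, μ (n / d) * (p : ℤ) ^ d) / n := by
  refine ⟨fun F _ _ hF => aux_main q n hn F hF, fun p hp => ?_⟩
  haveI := Fact.mk hp
  have h1 := aux_main p n hn (ZMod p) (ZMod.card p)
  rw [← h1, Int.mul_ediv_cancel_left _ (by positivity)]
end

section
/- For every integer n ≥ 1 and every integer x, Σ_{d | n} (n/d)·M_d(x) = Σ_{d | n} φ(n/d)·x^d, where the sums are over the positive divisors d of n and φ is Euler's totient function; equivalently, n·Σ_{d | n} (1/d)·Σ_{c | d} μ(d/c)·x^c = Σ_{d | n} φ(n/d)·x^d. -/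
open ArithmeticFunction
open scoped ArithmeticFunction.Moebius

/-- `k ↦ x^k` (with value `0` at `0`) as an arithmetic function. -/
noncomputable def powAF (x : ℤ) : ArithmeticFunction ℤ :=
  ⟨fun k => if k = 0 then 0 else x ^ k, by simp⟩

/-- Euler's totient as an integer-valued arithmetic function. -/
noncomputable def totAF : ArithmeticFunction ℤ :=
  ⟨fun m => (Nat.totient m : ℤ), by simp⟩

lemma id_mul_moebius_eq_totAF :
    ((ArithmeticFunction.id : ArithmeticFunction ℕ) : ArithmeticFunction ℤ) * μ = totAF := by
  have key : ∀ m > 0, ∑ p ∈ m.divisorsAntidiagonal, (μ p.1 : ℤ) * (p.2 : ℤ)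
      = (Nat.totient m : ℤ) := by
    refine (sum_eq_iff_sum_mul_moebius_eq (f := fun m => (Nat.totient m : ℤ))
      (g := fun m => (m : ℤ))).mp ?_
    intro m hm
    exact_mod_cast congrArg (Nat.cast : ℕ → ℤ) (Nat.sum_totient m)
  ext m
  rcases Nat.eq_zero_or_pos m with rfl | hm
  · simp [totAF]
  · rw [ArithmeticFunction.mul_apply]
    show _ = (Nat.totient m : ℤ)
    rw [← key m hm]
    rw [Nat.sum_divisorsAntidiagonal' (f := fun a b =>
      (((ArithmeticFunction.id : ArithmeticFunction ℕ) : ArithmeticFunction ℤ) a) * μ b)]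
    rw [Nat.sum_divisorsAntidiagonal (f := fun a b => (μ a : ℤ) * (b : ℤ))]
    refine Finset.sum_congr rfl fun d hd => ?_
    simp [mul_comm]

/-- For `n ≥ 1` and any integer `x`,
`Σ_{d ∣ n} (n/d)·M_d(x) = Σ_{d ∣ n} φ(n/d)·x^d`, where
`M_d(x) = Σ_{c ∣ d} μ (d/c)·x^c` and `φ` is Euler's totient function. -/
theorem sum_mobiusPolynomial_eq_sum_totient (n : ℕ) (hn : 1 ≤ n) (x : ℤ) :
    ∑ d ∈ n.divisors, ((n / d : ℕ) : ℤ) * (∑ c ∈ d.divisors, μ (d / c) * x ^ c) =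
      ∑ d ∈ n.divisors, (Nat.totient (n / d) : ℤ) * x ^ d := by
  have hinner : ∀ d : ℕ, 0 < d → (μ * powAF x) d = ∑ c ∈ d.divisors, (μ (d / c) : ℤ) * x ^ c := by
    intro d hd
    rw [ArithmeticFunction.mul_apply,
      Nat.sum_divisorsAntidiagonal' (f := fun a b => (μ a : ℤ) * (powAF x) b)]
    refine Finset.sum_congr rfl fun c hc => ?_
    have hc0 : c ≠ 0 := (Nat.pos_of_mem_divisors hc).ne'
    simp [powAF, hc0]
  have hL : ∑ d ∈ n.divisors, ((n / d : ℕ) : ℤ) * (∑ c ∈ d.divisors, μ (d / c) * x ^ c)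
      = (((ArithmeticFunction.id : ArithmeticFunction ℕ) : ArithmeticFunction ℤ)
          * (μ * powAF x)) n := by
    rw [ArithmeticFunction.mul_apply,
      Nat.sum_divisorsAntidiagonal' (f := fun a b =>
        (((ArithmeticFunction.id : ArithmeticFunction ℕ) : ArithmeticFunction ℤ) a)
          * (μ * powAF x) b)]
    refine Finset.sum_congr rfl fun d hd => ?_
    rw [hinner d (Nat.pos_of_mem_divisors hd)]
    simp
  have hR : ∑ d ∈ n.divisors, (Nat.totient (n / d) : ℤ) * x ^ d
      = (totAF * powAF x) n := by
    rw [ArithmeticFunction.mul_apply,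
      Nat.sum_divisorsAntidiagonal' (f := fun a b => totAF a * (powAF x) b)]
    refine Finset.sum_congr rfl fun d hd => ?_
    have hd0 : d ≠ 0 := (Nat.pos_of_mem_divisors hd).ne'
    simp [totAF, powAF, hd0]
  rw [hL, hR, ← mul_assoc, id_mul_moebius_eq_totAF]
end
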